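/- arXiv:1112.4706 — 2 statements merged into one kernel-verified Lean document; each statement's English description precedes it below -/
import Mathlib

section
/- Let (X,T) be an invertible dynamical system with flip F, and let m be an odd positive integer. Then p_{m,n}(T,F) = p_{m,0}(T,F) for every integer n. -/
lemma flip_zpow {X : Type*} (T : Equiv.Perm X) (F : X → X)
    (hTF : ∀ x, F (T x) = T⁻¹ (F x)) :
    ∀ (j : ℤ) (x : X), F ((T ^ j) x) = (T ^ (-j)) (F x) := by
  have hinv : ∀ x, F (T⁻¹ x) = T (F x) := by
    intro x
    have := hTF (T⁻¹ x)
    rw [show ∀ y, T (T⁻¹ y) = y from fun y => (Equiv.eq_symm_apply T).mp rfl] at this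
    rw [this, show ∀ y, T (T⁻¹ y) = y from fun y => (Equiv.eq_symm_apply T).mp rfl]
  intro j
  induction j using Int.induction_on with
  | zero => simp
  | succ i ih =>
    intro x
    have h1 : (T ^ ((i : ℤ) + 1)) x = (T ^ (i : ℤ)) (T x) := by
      rw [zpow_add_one, Equiv.Perm.mul_apply]
    rw [h1, ih, hTF, show (-((i : ℤ) + 1)) = -i + -1 by ring, zpow_add,
      zpow_neg_one, Equiv.Perm.mul_apply]
  | pred i ih =>
    intro x
    have h1 : (T ^ (-(i : ℤ) - 1)) x = (T ^ (-(i : ℤ))) (T⁻¹ x) := by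
      rw [show (-(i : ℤ) - 1) = -i + -1 by ring, zpow_add, zpow_neg_one,
        Equiv.Perm.mul_apply]
    rw [h1, ih, hinv, show (-(-(i : ℤ) - 1)) = -(-(i:ℤ)) + 1 by ring, zpow_add_one,
      Equiv.Perm.mul_apply]

/-- If `m` is an odd positive integer then `p_{m,n} = p_{m,0}` for all `n`. -/
theorem stmt_2 {X : Type*} (T : Equiv.Perm X) (F : X → X)
    (hTF : ∀ x, F (T x) = T⁻¹ (F x)) (hF2 : ∀ x, F (F x) = x)
    (m : ℕ) (hm : 1 ≤ m) (hodd : Odd m) (n : ℤ) :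
    Nat.card {x : X | (T ^ m) x = x ∧ (T ^ n) (F x) = x} =
      Nat.card {x : X | (T ^ m) x = x ∧ F x = x} := by
  obtain ⟨t, ht⟩ := hodd
  set k : ℤ := -((t : ℤ) + 1) * n with hk
  have hnk : n + 2 * k = -((m : ℤ) * n) := by
    rw [hk, ht]; push_cast; ring
  have hFz := flip_zpow T F hTF
  -- composing powers
  have hcomp : ∀ (a b : ℤ) (x : X), (T ^ a) ((T ^ b) x) = (T ^ (a + b)) x := by
    intro a b x
    rw [zpow_add, Equiv.Perm.mul_apply]
  -- fixed points of T^m are fixed by all multiples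
  have hfix : ∀ (x : X), (T ^ (m : ℤ)) x = x → ∀ j : ℤ, (T ^ ((m : ℤ) * j)) x = x := by
    intro x hx j
    rw [zpow_mul]
    exact Function.IsFixedPt.perm_zpow hx j
  have hnatpow : ∀ x : X, (T ^ m) x = (T ^ (m : ℤ)) x := by
    intro x; rw [zpow_natCast]
  refine Nat.card_congr ⟨fun x => ⟨(T ^ k) x.1, ?_, ?_⟩,
    fun y => ⟨(T ^ (-k)) y.1, ?_, ?_⟩, ?_, ?_⟩
  · -- T^m fixes T^k x
    obtain ⟨x, hx1, hx2⟩ := x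
    simp only [Set.mem_setOf_eq]
    rw [hnatpow, hcomp, add_comm, ← hcomp, ← hnatpow, hx1]
  · -- F (T^k x) = T^k x
    obtain ⟨x, hx1, hx2⟩ := x
    simp only [Set.mem_setOf_eq]
    have hFx : F x = (T ^ (-n)) x := by
      calc F x = (T ^ (-n)) ((T ^ n) (F x)) := by
            rw [hcomp, neg_add_cancel, zpow_zero]; rfl
        _ = (T ^ (-n)) x := by rw [hx2]
    rw [hFz, hFx, hcomp]
    have : -k + -n = k + (m : ℤ) * n := by linarith [hnk]
    rw [this, ← hcomp, hfix x (by rw [← hnatpow]; exact hx1)]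
  · -- T^m fixes T^(-k) y
    obtain ⟨y, hy1, hy2⟩ := y
    simp only [Set.mem_setOf_eq]
    rw [hnatpow, hcomp, add_comm, ← hcomp, ← hnatpow, hy1]
  · -- T^n (F (T^(-k) y)) = T^(-k) y
    obtain ⟨y, hy1, hy2⟩ := y
    simp only [Set.mem_setOf_eq]
    rw [hFz, neg_neg, hy2, hcomp]
    have : n + k = -k + (m : ℤ) * (-n) := by linarith [hnk]
    rw [this, ← hcomp, hfix y (by rw [← hnatpow]; exact hy1)]
  · intro x
    apply Subtype.ext
    simp only
    rw [hcomp, neg_add_cancel, zpow_zero]; rfl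
  · intro y
    apply Subtype.ext
    simp only
    rw [hcomp, add_neg_cancel, zpow_zero]; rfl
end

section
/- Let π be a permutation of a nonempty finite set Φ and let 𝒞 = {E ⊆ Φ : π(E) = E} be the collection of π-invariant subsets. Then the alternating sum over nonempty E ∈ 𝒞 of (-1)^{|E|+1} · sgn(π restricted to E) equals 1. -/
open Finset
open scoped symmDiff

/-- The sign of the restriction of `π` to an invariant finite set `E`
(`0` if `E` is not invariant, a junk value). -/
noncomputable def restrictedSign {Φ : Type*} [Fintype Φ] [DecidableEq Φ]
    (π : Equiv.Perm Φ) (E : Finset Φ) : ℤ :=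
  if h : ∀ x, x ∈ E ↔ π x ∈ E then
    (Equiv.Perm.sign (π.subtypePerm (p := fun x => x ∈ E) (fun x => (h x).symm)) : ℤ)
  else 0

section Aux

variable {Φ : Type*} [Fintype Φ] [DecidableEq Φ] (π : Equiv.Perm Φ)

private lemma extPerm_apply (E : Finset Φ) (h : ∀ x, x ∈ E ↔ π x ∈ E) (x : Φ) :
    Equiv.Perm.ofSubtype (π.subtypePerm (p := fun x => x ∈ E) (fun x => (h x).symm)) x = if x ∈ E then π x else x := by
  by_cases hx : x ∈ E
  · rw [if_pos hx, Equiv.Perm.ofSubtype_apply_of_mem _ hx]; rfl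
  · rw [if_neg hx, Equiv.Perm.ofSubtype_apply_of_not_mem _ hx]

private lemma restrictedSign_eq (E : Finset Φ) (h : ∀ x, x ∈ E ↔ π x ∈ E) :
    restrictedSign π E =
      (Equiv.Perm.sign (Equiv.Perm.ofSubtype (π.subtypePerm (p := fun x => x ∈ E) (fun x => (h x).symm))) : ℤ) := by
  rw [restrictedSign, dif_pos h, Equiv.Perm.sign_ofSubtype]

private lemma restrictedSign_union (A B : Finset Φ) (hd : Disjoint A B)
    (hA : ∀ x, x ∈ A ↔ π x ∈ A) (hB : ∀ x, x ∈ B ↔ π x ∈ B) :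
    restrictedSign π (A ∪ B) = restrictedSign π A * restrictedSign π B := by
  have hU : ∀ x, x ∈ A ∪ B ↔ π x ∈ A ∪ B := by
    intro x; simp only [mem_union]; exact or_congr (hA x) (hB x)
  have key : Equiv.Perm.ofSubtype (π.subtypePerm (p := fun x => x ∈ A ∪ B) (fun x => (hU x).symm)) =
      Equiv.Perm.ofSubtype (π.subtypePerm (p := fun x => x ∈ A) (fun x => (hA x).symm)) * Equiv.Perm.ofSubtype (π.subtypePerm (p := fun x => x ∈ B) (fun x => (hB x).symm)) := by
    ext x
    rw [Equiv.Perm.mul_apply, extPerm_apply π (A ∪ B) hU, extPerm_apply π A hA, extPerm_apply π B hB]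
    by_cases hxA : x ∈ A
    · have hxB : x ∉ B := fun hxB => (Finset.disjoint_left.mp hd hxA) hxB
      simp [hxA, hxB, Finset.mem_union]
    · by_cases hxB : x ∈ B
      · have hπB : π x ∈ B := (hB x).mp hxB
        have hπA : π x ∉ A := fun hh => (Finset.disjoint_left.mp hd hh) hπB
        simp [hxA, hxB, hπA, Finset.mem_union]
      · simp [hxA, hxB, Finset.mem_union]
  rw [restrictedSign_eq π _ hU, restrictedSign_eq π _ hA, restrictedSign_eq π _ hB,
    key, map_mul]
  push_cast
  ring

end Aux

/-- Lemma 2.2: alternating sum of signs over nonempty invariant subsets is 1. -/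
theorem stmt_4 {Φ : Type*} [Fintype Φ] [DecidableEq Φ] [Nonempty Φ]
    (π : Equiv.Perm Φ) :
    ∑ E ∈ Finset.univ.filter
        (fun E : Finset Φ => (∀ x, x ∈ E ↔ π x ∈ E) ∧ E.Nonempty),
      (-1 : ℤ) ^ (E.card + 1) * restrictedSign π E = 1 := by
  classical
  obtain ⟨x0⟩ := ‹Nonempty Φ›
  -- the orbit of x0
  set O : Finset Φ := Finset.univ.filter (fun y => π.SameCycle x0 y) with hO
  have hmemO : ∀ y, y ∈ O ↔ π.SameCycle x0 y := by
    intro y; simp [hO]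
  have hOinv : ∀ x, x ∈ O ↔ π x ∈ O := by
    intro x
    rw [hmemO, hmemO]
    exact (Equiv.Perm.sameCycle_apply_right).symm
  have hx0O : x0 ∈ O := (hmemO x0).mpr (Equiv.Perm.SameCycle.refl π x0)
  -- invariant sets are closed along orbits
  have closed : ∀ (E : Finset Φ), (∀ x, x ∈ E ↔ π x ∈ E) →
      ∀ (i : ℤ) (z : Φ), (z ∈ E ↔ (π ^ i) z ∈ E) := by
    intro E hE i
    induction i using Int.induction_on with
    | zero => simp
    | succ n ih =>
        intro z
        have : (π ^ ((n : ℤ) + 1)) z = (π ^ (n : ℤ)) (π z) := by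
          rw [zpow_add_one, Equiv.Perm.mul_apply]
        rw [this, hE z]
        exact ih (π z)
    | pred n ih =>
        intro z
        have : (π ^ ((-n : ℤ) - 1)) z = (π ^ (-n : ℤ)) (π⁻¹ z) := by
          rw [zpow_sub_one, Equiv.Perm.mul_apply]
        have h2 : z ∈ E ↔ π⁻¹ z ∈ E := by
          conv_lhs => rw [show z = π (π⁻¹ z) by simp]
          exact (hE (π⁻¹ z)).symm
        rw [this, h2]
        exact ih (π⁻¹ z)
  -- the ambient perm of the orbit is the cycle of x0
  have hcyc : Equiv.Perm.ofSubtype (π.subtypePerm (p := fun x => x ∈ O) (fun x => (hOinv x).symm)) = π.cycleOf x0 := by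
    ext y
    rw [extPerm_apply π O hOinv, Equiv.Perm.cycleOf_apply]
    by_cases hsc : π.SameCycle x0 y
    · rw [if_pos ((hmemO y).mpr hsc), if_pos hsc]
    · rw [if_neg (fun hh => hsc ((hmemO y).mp hh)), if_neg hsc]
  -- sign of the orbit
  have hsignO : restrictedSign π O = (-1 : ℤ) ^ (O.card + 1) := by
    rw [restrictedSign_eq π O hOinv, hcyc]
    by_cases hfix : π x0 = x0
    · have h1 : π.cycleOf x0 = 1 := by
        rw [Equiv.Perm.cycleOf_eq_one_iff]; exact hfix
      have hcard : O = {x0} := by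
        ext y
        rw [hmemO, Finset.mem_singleton]
        constructor
        · rintro ⟨i, rfl⟩
          exact Equiv.Perm.zpow_apply_eq_self_of_apply_eq_self hfix i
        · intro hy; rw [hy]
      simp [h1, hcard]
    · have hic : (π.cycleOf x0).IsCycle := Equiv.Perm.isCycle_cycleOf π hfix
      have hsup : (π.cycleOf x0).support = O := by
        ext y
        rw [Equiv.Perm.mem_support_cycleOf_iff, hmemO]
        simp [Equiv.Perm.mem_support, hfix]
      rw [hic.sign, hsup, pow_succ]
      push_cast
      ring
  have hOne : O ≠ ∅ := Finset.ne_empty_of_mem hx0O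
  -- the term function
  set f : Finset Φ → ℤ := fun E => (-1 : ℤ) ^ (E.card + 1) * restrictedSign π E with hf
  -- adding the orbit disjointly negates the term
  have f_union : ∀ (A : Finset Φ), (∀ x, x ∈ A ↔ π x ∈ A) → Disjoint A O →
      f (A ∪ O) = - f A := by
    intro A hA hd
    have hcard : (A ∪ O).card = A.card + O.card := Finset.card_union_of_disjoint hd
    have hpow : ((-1 : ℤ)) ^ ((A ∪ O).card + 1) * (-1) ^ (O.card + 1) =
        -(-1 : ℤ) ^ (A.card + 1) := by
      rw [hcard, ← pow_add,
        show A.card + O.card + 1 + (O.card + 1) = (A.card + 1) + (2 * O.card + 1) by ring,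
        pow_add]
      have h21 : ((-1 : ℤ)) ^ (2 * O.card + 1) = -1 := by
        rw [pow_succ, pow_mul]; norm_num
      rw [h21]; ring
    rw [hf]
    simp only
    rw [restrictedSign_union π A O hd hA hOinv, hsignO]
    linear_combination restrictedSign π A * hpow
  -- symmDiff with the orbit negates the term
  have f_symm : ∀ (E : Finset Φ), (∀ x, x ∈ E ↔ π x ∈ E) → f (E ∆ O) = - f E := by
    intro E hE
    by_cases hx0 : x0 ∈ E
    · -- O ⊆ E
      have hsub : O ⊆ E := by
        intro y hy
        obtain ⟨i, hi⟩ := (hmemO y).mp hy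
        exact hi ▸ ((closed E hE i x0).mp hx0)
      have hEsymm : E ∆ O = E \ O := by
        rw [symmDiff_def]
        have : O \ E = ∅ := by
          rw [Finset.sdiff_eq_empty_iff_subset]; exact hsub
        simp [this]
      have hdinv : ∀ x, x ∈ E \ O ↔ π x ∈ E \ O := by
        intro x; simp only [Finset.mem_sdiff]
        exact and_congr (hE x) (not_congr (hOinv x))
      have hd : Disjoint (E \ O) O := Finset.sdiff_disjoint
      have hEeq : (E \ O) ∪ O = E := Finset.sdiff_union_of_subset hsub
      have := f_union (E \ O) hdinv hd
      rw [hEeq] at this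
      rw [hEsymm]; linarith [this]
    · -- O disjoint from E
      have hd : Disjoint E O := by
        rw [Finset.disjoint_right]
        intro y hy
        obtain ⟨i, hi⟩ := (hmemO y).mp hy
        exact fun hyE => hx0 ((closed E hE i x0).mpr (hi ▸ hyE))
      have : E ∆ O = E ∪ O := by
        rw [hd.symmDiff_eq_sup]; rfl
      rw [this, f_union E hE hd]
  -- sum over all invariant sets vanishes by the involution E ↦ E ∆ O
  have hzero : ∑ E ∈ Finset.univ.filter (fun E : Finset Φ => ∀ x, x ∈ E ↔ π x ∈ E),
      f E = 0 := by
    apply Finset.sum_involution (fun E _ => E ∆ O)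
    · intro E hE
      rw [Finset.mem_filter] at hE
      rw [f_symm E hE.2]; ring
    · intro E _ _
      simp only [ne_eq, symmDiff_eq_left]
      exact fun h => hOne (by simpa using h)
    · intro E hE
      rw [Finset.mem_filter] at hE ⊢
      refine ⟨Finset.mem_univ _, fun x => ?_⟩
      simp only [Finset.mem_symmDiff]
      rw [hE.2 x, hOinv x]
    · intro E _
      exact symmDiff_symmDiff_cancel_right O E
  -- the empty set contributes -1
  have hempty_inv : ∀ x : Φ, x ∈ (∅ : Finset Φ) ↔ π x ∈ (∅ : Finset Φ) := by simp
  have hfempty : f ∅ = -1 := by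
    rw [hf]
    simp only [Finset.card_empty]
    rw [restrictedSign_eq π ∅ hempty_inv]
    have : Equiv.Perm.ofSubtype (π.subtypePerm (p := fun x => x ∈ (∅ : Finset Φ)) (fun x => (hempty_inv x).symm)) = 1 := by
      ext y
      rw [extPerm_apply π ∅ hempty_inv]
      simp
    rw [this]
    simp
  -- split off the empty set
  have hmem : (∅ : Finset Φ) ∈ Finset.univ.filter (fun E : Finset Φ => ∀ x, x ∈ E ↔ π x ∈ E) :=
    Finset.mem_filter.mpr ⟨Finset.mem_univ _, hempty_inv⟩
  have herase : (Finset.univ.filter (fun E : Finset Φ => ∀ x, x ∈ E ↔ π x ∈ E)).erase ∅ =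
      Finset.univ.filter (fun E : Finset Φ => (∀ x, x ∈ E ↔ π x ∈ E) ∧ E.Nonempty) := by
    ext E
    simp only [Finset.mem_erase, Finset.mem_filter, Finset.mem_univ, true_and, ne_eq,
      ← Finset.nonempty_iff_ne_empty]
    tauto
  have := Finset.add_sum_erase _ f hmem
  rw [hzero, hfempty, herase] at this
  have h2 : ∑ E ∈ Finset.univ.filter
      (fun E : Finset Φ => (∀ x, x ∈ E ↔ π x ∈ E) ∧ E.Nonempty), f E = 1 := by linarith
  exact h2
end
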